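/- The matrix K = (F₆⊗I₆)·P·(F₆⊗I₆) is Hermitian, K = Kᴴ, it is unitary, and every entry of 6·K is a sixth root of unity; hence 6·K is a Butson-type complex Hadamard matrix in BH(36,6). -/

import Mathlib

open Matrix Complex BigOperators

noncomputable section

/-- Reshuffling: `X^R_{(j,k),(l,m)} = X_{(j,l),(k,m)}`. -/
def reshuffle {d : ℕ} (X : Matrix (Fin d × Fin d) (Fin d × Fin d) ℂ) :
    Matrix (Fin d × Fin d) (Fin d × Fin d) ℂ :=
  fun p q => X (p.1, q.1) (p.2, q.2)

/-- Partial transpose: `X^Γ_{(j,k),(l,m)} = X_{(j,m),(l,k)}`. -/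
def ptranspose {d : ℕ} (X : Matrix (Fin d × Fin d) (Fin d × Fin d) ℂ) :
    Matrix (Fin d × Fin d) (Fin d × Fin d) ℂ :=
  fun p q => X (p.1, q.2) (q.1, p.2)

def IsUnitary {n : Type*} [Fintype n] [DecidableEq n] (M : Matrix n n ℂ) : Prop :=
  M ∈ Matrix.unitaryGroup n ℂ

/-- Kronecker product with index convention `(V⊗W)_{(j,k),(l,m)} = V_{jl} W_{km}`. -/
def kron {d : ℕ} (A B : Matrix (Fin d) (Fin d) ℂ) :
    Matrix (Fin d × Fin d) (Fin d × Fin d) ℂ :=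
  fun p q => A p.1 q.1 * B p.2 q.2

/-- The unitary Fourier matrix of order six, `(F₆)_{jk} = ω^{jk}/√6` with `ω = exp(2πi/6)`. -/
def F6 : Matrix (Fin 6) (Fin 6) ℂ :=
  fun j k => Complex.exp (2 * (Real.pi : ℂ) * Complex.I * (j.val : ℂ) * (k.val : ℂ) / 6) /
    (Real.sqrt 6 : ℂ)

/-- The cyclic shift on ℂ⁶: `X|j⟩ = |j+1 mod 6⟩`. -/
def Xshift : Matrix (Fin 6) (Fin 6) ℂ := fun j k => if j = k + 1 then 1 else 0

/-- The generalized CNOT permutation `P = Σ_j |j⟩⟨j| ⊗ X^j` of order 36. -/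
def Pcnot : Matrix (Fin 6 × Fin 6) (Fin 6 × Fin 6) ℂ :=
  fun p q => if p.1 = q.1 then (Xshift ^ (p.1 : ℕ)) p.2 q.2 else 0

def Kmat : Matrix (Fin 6 × Fin 6) (Fin 6 × Fin 6) ℂ := kron F6 1 * Pcnot * kron F6 1

def Lmat : Matrix (Fin 6 × Fin 6) (Fin 6 × Fin 6) ℂ := kron F6 1 * Pcnot * kron F6ᴴ 1

/-- Index of the pair `(j,k)` in the vector of length 36 (row-major order). -/
def idx (p : Fin 6 × Fin 6) : ℕ := 6 * p.1.val + p.2.val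

def Λ₁ (p : Fin 6 × Fin 6) : ℝ :=
  ([0,1,0,1,3,3,3,3,1,5,2,4,2,1,3,1,2,3,1,1,2,0,3,5,5,3,2,3,2,5,4,4,1,5,5,1] :
    List ℝ).getD (idx p) 0 / 6

def Λ₂ (p : Fin 6 × Fin 6) : ℝ :=
  ([0,2,3,3,2,0,0,3,2,2,0,4,2,0,3,5,0,0,0,5,0,0,2,0,2,2,5,3,2,4,2,3,0,2,0,0] :
    List ℝ).getD (idx p) 0 / 6

def Λ₃ (p : Fin 6 × Fin 6) : ℝ :=
  ([0,2,2,0,0,1,0,1,1,1,2,1,0,2,0,2,2,2,2,0,2,2,2,1,1,1,2,0,2,2,0,1,2,2,1,0] :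
    List ℝ).getD (idx p) 0 / 3

/-- `𝒰_j = K · diag(exp{2πiΛ}) · L`. -/
def Umat (Λ : Fin 6 × Fin 6 → ℝ) : Matrix (Fin 6 × Fin 6) (Fin 6 × Fin 6) ℂ :=
  Kmat * Matrix.diagonal (fun p => Complex.exp (2 * (Real.pi : ℂ) * Complex.I * (Λ p : ℂ))) * Lmat

namespace KP

noncomputable def e (n : ℤ) : ℂ := Complex.exp (2 * (Real.pi:ℂ) * Complex.I * (n:ℂ) / 6)

lemma e_add (m n : ℤ) : e (m + n) = e m * e n := by
  rw [e, e, e, ← Complex.exp_add]; congr 1; push_cast; ring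

lemma e_zero : e 0 = 1 := by simp [e]

lemma e_six_mul (t : ℤ) : e (6 * t) = 1 := by
  rw [e]
  have h : (2 * (Real.pi:ℂ) * Complex.I * ((6*t : ℤ):ℂ) / 6) = (t:ℂ) * (2 * (Real.pi:ℂ) * Complex.I) := by
    push_cast; ring
  rw [h, Complex.exp_int_mul_two_pi_mul_I]

lemma e_congr {m n : ℤ} (h : (6:ℤ) ∣ m - n) : e m = e n := by
  obtain ⟨t, ht⟩ := h
  have : m = n + 6 * t := by linarith
  rw [this, e_add, e_six_mul, mul_one]

lemma e_pow (n : ℤ) (k : ℕ) : e n ^ k = e (k * n) := by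
  induction k with
  | zero => simp [e_zero]
  | succ k ih => rw [pow_succ, ih, ← e_add]; congr 1; push_cast; ring

lemma e_conj (n : ℤ) : (starRingEnd ℂ) (e n) = e (-n) := by
  rw [e, e, ← Complex.exp_conj]
  congr 1
  simp [map_div₀, Complex.conj_I, map_ofNat]

lemma e_abs (n : ℤ) : ‖e n‖ = 1 := by
  rw [e]
  have h : 2 * (Real.pi:ℂ) * Complex.I * (n:ℂ) / 6 = ((2 * Real.pi * (n:ℝ) / 6 : ℝ):ℂ) * Complex.I := by
    push_cast; ring
  rw [h, Complex.norm_exp_ofReal_mul_I]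

lemma e_eq_one_iff {n : ℤ} : e n = 1 ↔ (6:ℤ) ∣ n := by
  rw [e, Complex.exp_eq_one_iff]
  constructor
  · rintro ⟨k, hk⟩
    refine ⟨k, ?_⟩
    have hπ : (Real.pi:ℂ) ≠ 0 := by exact_mod_cast Real.pi_ne_zero
    have hI : Complex.I ≠ 0 := Complex.I_ne_zero
    have h2 : (2:ℂ) * (Real.pi:ℂ) * Complex.I ≠ 0 := by
      simp [hπ, hI]
    have hmul : (2:ℂ) * (Real.pi:ℂ) * Complex.I * (n:ℂ) = (2:ℂ) * (Real.pi:ℂ) * Complex.I * (6 * (k:ℂ)) := by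
      linear_combination (6:ℂ) * hk
    have : (n:ℂ) = 6 * (k:ℂ) := mul_left_cancel₀ h2 hmul
    exact_mod_cast this
  · rintro ⟨k, rfl⟩
    exact ⟨k, by push_cast; field_simp⟩




lemma sum_e (t : ℤ) : ∑ a : Fin 6, e (a.val * t) = if (6:ℤ) ∣ t then 6 else 0 := by
  have h : ∀ a : Fin 6, e ((a.val : ℤ) * t) = e t ^ a.val := fun a => (e_pow t a.val).symm
  simp only [h]
  rw [Fin.sum_univ_eq_sum_range (fun i => e t ^ i) 6]
  by_cases hd : (6:ℤ) ∣ t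
  · rw [if_pos hd]
    have h1 : e t = 1 := e_eq_one_iff.mpr hd
    simp [h1]
  · rw [if_neg hd]
    have h1 : e t ≠ 1 := fun h => hd (e_eq_one_iff.mp h)
    rw [geom_sum_eq h1]
    have : e t ^ 6 = 1 := by
      rw [e_pow]
      exact e_eq_one_iff.mpr ⟨t, by ring⟩
    simp [this]

lemma F6_apply (j k : Fin 6) : F6 j k = e ((j.val : ℤ) * k.val) / (Real.sqrt 6 : ℂ) := by
  rw [F6, e]
  congr 2
  push_cast
  ring

open Fin.CommRing in
lemma Xshift_pow (n : ℕ) (j k : Fin 6) :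
    (Xshift ^ n) j k = if j = k + (n : Fin 6) then 1 else 0 := by
  induction n generalizing j k with
  | zero => simp [Matrix.one_apply]
  | succ n ih =>
    rw [pow_succ, Matrix.mul_apply]
    simp only [ih, Xshift, ite_mul, one_mul, zero_mul, mul_ite, mul_one, mul_zero]
    rw [Finset.sum_ite_eq' Finset.univ (k+1) (fun t => if j = t + (n : Fin 6) then (1:ℂ) else 0)]
    simp only [Finset.mem_univ, if_true]
    congr 1
    have : ((n+1 : ℕ) : Fin 6) = (n : Fin 6) + 1 := by push_cast; ring
    rw [this, add_assoc, add_comm (1 : Fin 6) ((n : Fin 6))]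

open Fin.CommRing in
lemma Pcnot_apply (p q : Fin 6 × Fin 6) :
    Pcnot p q = if q = (p.1, p.2 - p.1) then 1 else 0 := by
  rcases p with ⟨j,k⟩; rcases q with ⟨c,d⟩
  simp only [Pcnot, Xshift_pow, Fin.cast_val_eq_self, Prod.mk.injEq]
  by_cases h1 : j = c
  · subst h1
    simp only [if_true, true_and]
    have : (k = d + j) ↔ (d = k - j) := by
      constructor <;> intro h
      · rw [h]; ring
      · rw [h]; ring
    simp [this, eq_comm]
  · rw [if_neg h1, if_neg]
    rintro ⟨h, -⟩
    exact h1 h.symm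

lemma PK_apply (p q : Fin 6 × Fin 6) :
    (Pcnot * kron F6 1) p q = if p.2 - p.1 = q.2 then F6 p.1 q.1 else 0 := by
  rw [Matrix.mul_apply]
  simp only [Pcnot_apply, kron, Matrix.one_apply, ite_mul, one_mul, zero_mul]
  rw [Finset.sum_ite_eq' Finset.univ (p.1, p.2 - p.1)
    (fun r => F6 r.1 q.1 * if r.2 = q.2 then 1 else 0)]
  simp only [Finset.mem_univ, if_true, mul_ite, mul_one, mul_zero]

open Fin.CommRing in
lemma Kmat_apply' (p q : Fin 6 × Fin 6) :
    Kmat p q = F6 p.1 (p.2 - q.2) * F6 (p.2 - q.2) q.1 := by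
  have hK : Kmat = kron F6 1 * (Pcnot * kron F6 1) := by rw [Kmat, Matrix.mul_assoc]
  rw [hK, Matrix.mul_apply]
  simp only [PK_apply, kron, Matrix.one_apply, mul_ite, mul_one, mul_zero]
  rw [Fintype.sum_prod_type]
  have hb : ∀ a : Fin 6, (∑ b : Fin 6,
      (if b - a = q.2 then (if p.2 = b then F6 p.1 a else 0) * F6 a q.1 else 0)) =
      (if p.2 - a = q.2 then F6 p.1 a * F6 a q.1 else 0) := by
    intro a
    rw [Finset.sum_eq_single p.2]
    · simp
    · intro b _ hb
      simp [Ne.symm hb]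
    · simp
  simp only [hb]
  have hcond : ∀ a : Fin 6, (p.2 - a = q.2) ↔ (a = p.2 - q.2) := by
    intro a
    constructor <;> intro h
    · rw [← h]; ring
    · rw [h]; ring
  simp only [hcond]
  rw [Finset.sum_ite_eq' Finset.univ (p.2 - q.2) (fun a => F6 p.1 a * F6 a q.1),
    if_pos (Finset.mem_univ _)]

lemma sqrt6_mul_self : ((Real.sqrt 6 : ℝ) : ℂ) * ((Real.sqrt 6 : ℝ) : ℂ) = 6 := by
  rw [← Complex.ofReal_mul, Real.mul_self_sqrt (by norm_num : (0:ℝ) ≤ 6)]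
  norm_num

lemma Kmat_apply (p q : Fin 6 × Fin 6) :
    Kmat p q = e (((p.1.val : ℤ) + q.1.val) * ((p.2 - q.2).val : ℤ)) / 6 := by
  rw [Kmat_apply', F6_apply, F6_apply, div_mul_div_comm, ← e_add, sqrt6_mul_self]
  congr 2
  ring

lemma kron_mul {d : ℕ} (A B C D : Matrix (Fin d) (Fin d) ℂ) :
    kron A B * kron C D = kron (A * C) (B * D) := by
  ext p q
  rw [Matrix.mul_apply, Fintype.sum_prod_type]
  simp only [kron, Matrix.mul_apply]
  rw [Finset.sum_mul_sum]
  apply Finset.sum_congr rfl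
  intro a _
  apply Finset.sum_congr rfl
  intro b _
  ring

lemma kron_conjT {d : ℕ} (A B : Matrix (Fin d) (Fin d) ℂ) :
    (kron A B)ᴴ = kron Aᴴ Bᴴ := by
  ext p q
  simp [kron, Matrix.conjTranspose_apply]

lemma kron_one_one {d : ℕ} : kron (1 : Matrix (Fin d) (Fin d) ℂ) 1 = 1 := by
  ext p q
  simp only [kron, Matrix.one_apply, Prod.ext_iff]
  by_cases h1 : p.1 = q.1 <;> by_cases h2 : p.2 = q.2 <;> simp [h1, h2]

lemma fin6_dvd_iff (j l : Fin 6) : (6:ℤ) ∣ ((j.val : ℤ) - l.val) ↔ j = l := by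
  have hj := j.isLt
  have hl := l.isLt
  rw [Fin.ext_iff]
  omega

lemma F6_mul_star : F6 * F6ᴴ = 1 := by
  ext j l
  rw [Matrix.mul_apply, Matrix.one_apply]
  have hterm : ∀ a : Fin 6, F6 j a * F6ᴴ a l = e ((a.val : ℤ) * ((j.val : ℤ) - l.val)) / 6 := by
    intro a
    rw [Matrix.conjTranspose_apply, F6_apply, F6_apply, RCLike.star_def, map_div₀, e_conj, Complex.conj_ofReal,
      div_mul_div_comm, sqrt6_mul_self, ← e_add]
    congr 2
    ring
  simp only [hterm]
  rw [← Finset.sum_div, sum_e]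
  by_cases h : j = l
  · simp [h, (fin6_dvd_iff j l).mpr h]
  · rw [if_neg h, if_neg (fun hd => h ((fin6_dvd_iff j l).mp hd))]
    simp

lemma Pcnot_mul_star : Pcnot * Pcnotᴴ = 1 := by
  ext p q
  rw [Matrix.mul_apply, Matrix.one_apply]
  have hterm : ∀ r, Pcnot p r * Pcnotᴴ r q =
      if r = (p.1, p.2 - p.1) then (if r = (q.1, q.2 - q.1) then 1 else 0) else 0 := by
    intro r
    rw [Matrix.conjTranspose_apply, Pcnot_apply, Pcnot_apply]
    by_cases h1 : r = (p.1, p.2 - p.1) <;> by_cases h2 : r = (q.1, q.2 - q.1) <;>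
      simp [h1, h2]
  simp only [hterm]
  rw [Finset.sum_ite_eq' Finset.univ (p.1, p.2 - p.1)
    (fun r => if r = (q.1, q.2 - q.1) then (1:ℂ) else 0), if_pos (Finset.mem_univ _)]
  congr 1
  simp only [Prod.ext_iff, eq_iff_iff]
  constructor
  · rintro ⟨h1, h2⟩
    refine ⟨h1, ?_⟩
    have : p.2 - p.1 = q.2 - q.1 := h2
    rw [h1] at this
    have := congrArg (· + q.1) this
    simpa using this
  · rintro ⟨h1, h2⟩
    exact ⟨h1, by rw [h1, h2]⟩


lemma kronF6_mem : kron F6 1 ∈ Matrix.unitaryGroup (Fin 6 × Fin 6) ℂ := by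
  rw [Matrix.mem_unitaryGroup_iff, Matrix.star_eq_conjTranspose, kron_conjT, kron_mul,
    F6_mul_star, Matrix.conjTranspose_one, Matrix.mul_one, kron_one_one]

lemma Pcnot_mem : Pcnot ∈ Matrix.unitaryGroup (Fin 6 × Fin 6) ℂ := by
  rw [Matrix.mem_unitaryGroup_iff, Matrix.star_eq_conjTranspose]
  exact Pcnot_mul_star

lemma Kmat_mem : Kmat ∈ Matrix.unitaryGroup (Fin 6 × Fin 6) ℂ :=
  mul_mem (mul_mem kronF6_mem Pcnot_mem) kronF6_mem

lemma Kmat_mul_star : Kmat * Kmatᴴ = 1 := by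
  have := Matrix.mem_unitaryGroup_iff.mp Kmat_mem
  rwa [Matrix.star_eq_conjTranspose] at this

lemma val_sub_add : ∀ k m : Fin 6, ((k - m).val + (m - k).val) % 6 = 0 := by decide

lemma Kmat_herm : Kmat = Kmatᴴ := by
  ext p q
  rw [Matrix.conjTranspose_apply, Kmat_apply, Kmat_apply, RCLike.star_def, map_div₀, e_conj,
    map_ofNat]
  congr 1
  apply e_congr
  have h := val_sub_add p.2 q.2
  have hd : (6:ℤ) ∣ (((p.2 - q.2).val : ℤ) + ((q.2 - p.2).val : ℤ)) := by
    have : (6:ℕ) ∣ ((p.2 - q.2).val + (q.2 - p.2).val) := Nat.dvd_of_mod_eq_zero h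
    exact_mod_cast Int.natCast_dvd_natCast.mpr this
  obtain ⟨t, ht⟩ := hd
  refine ⟨((p.1.val : ℤ) + q.1.val) * t, ?_⟩
  have : ((q.2 - p.2).val : ℤ) = 6 * t - ((p.2 - q.2).val : ℤ) := by linarith
  rw [this]
  ring


end KP

/-- `K = (F₆⊗I₆)·P·(F₆⊗I₆)` is Hermitian and unitary, and `6·K` is a Butson-type
complex Hadamard matrix in BH(36,6): all entries of `6·K` are sixth roots of unity
(hence of modulus one) and `(6K)(6K)ᴴ = 36·I`. -/
theorem Kmat_hermitian_unitary_butson :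
    Kmat = Kmatᴴ ∧
    IsUnitary Kmat ∧
    (∀ p q, ((6 : ℂ) * Kmat p q) ^ 6 = 1) ∧
    (∀ p q, ‖(6 : ℂ) * Kmat p q‖ = 1) ∧
    ((6 : ℂ) • Kmat) * ((6 : ℂ) • Kmat)ᴴ =
      (36 : ℂ) • (1 : Matrix (Fin 6 × Fin 6) (Fin 6 × Fin 6) ℂ) := by
  have hent : ∀ p q : Fin 6 × Fin 6, (6:ℂ) * Kmat p q =
      KP.e (((p.1.val : ℤ) + q.1.val) * ((p.2 - q.2).val : ℤ)) := by
    intro p q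
    rw [KP.Kmat_apply]
    field_simp
  refine ⟨KP.Kmat_herm, KP.Kmat_mem, ?_, ?_, ?_⟩
  · intro p q
    rw [hent, KP.e_pow]
    push_cast
    exact KP.e_six_mul _
  · intro p q
    rw [hent]
    exact KP.e_abs _
  · rw [Matrix.conjTranspose_smul]
    have hstar : star (6:ℂ) = 6 := by simp
    rw [hstar, Matrix.smul_mul, Matrix.mul_smul, KP.Kmat_mul_star, smul_smul]
    norm_num
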